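/- arXiv:math/0402075 — 5 statements merged into one kernel-verified Lean document; each statement's English description precedes it below -/
import Mathlib

section
/- Let H be a finite dimensional hereditary algebra over a field k, and let M, X be finitely generated H-modules with Ext¹(M, M) = 0. Then Hom(rej_M(X), M) = 0, where rej_M(X) = ⋂_{f : X → M} Ker f. -/
/-!
From `Ext¹(M, M) = 0` we get `Ext¹(Mⁿ, M) = 0`. If `π : P → Mⁿ` is a projective presentation and
`U ≤ Mⁿ`, then `π⁻¹(U) → U` is again a projective presentation, because `H` is hereditary, and it
has the same kernel as `π`; hence `Ext¹(U, M) = 0`. As `X` has finite length, `rej_M(X)` is the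
kernel of a single map `X → Mⁿ`; taking `U` to be its image, every map `rej_M(X) → M` extends to a
map `X → M`, and such a map vanishes on `rej_M(X)`.
-/

open CategoryTheory

/-- `Ext¹` of finitely generated modules, as an abelian group (`ℤ`-module). -/
noncomputable def ext1 (Λ : Type) [Ring Λ] (M N : ModuleCat Λ) : ModuleCat ℤ :=
  ((Ext ℤ (ModuleCat Λ) 1).obj (Opposite.op M)).obj N

/-- The reject of `M` in `X`: the intersection of the kernels of all maps `X → M`. -/
noncomputable def reject (Λ : Type) [Ring Λ] (M X : ModuleCat Λ) : Submodule Λ X :=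
  ⨅ f : X →ₗ[Λ] M, LinearMap.ker f

open LinearMap

universe u v

section ExtendsMaps

variable {Λ : Type*} [Ring Λ] {P : Type*} [AddCommGroup P] [Module Λ P]

/-- For `K = ker π` with `π : P → N` surjective and `P` projective, this says `Ext¹(N, M) = 0`. -/
def Submodule.ExtendsMaps (K : Submodule Λ P) (M : Type*) [AddCommGroup M] [Module Λ M] :
    Prop :=
  ∀ h : K →ₗ[Λ] M, ∃ g : P →ₗ[Λ] M, g ∘ₗ K.subtype = h

variable {P' Q N M : Type*} [AddCommGroup P'] [Module Λ P'] [AddCommGroup Q] [Module Λ Q]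
  [AddCommGroup N] [Module Λ N] [AddCommGroup M] [Module Λ M]

namespace Submodule.ExtendsMaps

theorem comap_subtype {K W : Submodule Λ P} (hKW : K ≤ W) (hK : K.ExtendsMaps M) :
    (K.comap W.subtype).ExtendsMaps M := by
  intro h
  let e := Submodule.comapSubtypeEquivOfLe hKW
  obtain ⟨g, hg⟩ := hK (h ∘ₗ e.symm.toLinearMap)
  refine ⟨g ∘ₗ W.subtype, LinearMap.ext fun x => ?_⟩
  have hgx := LinearMap.congr_fun hg (e x)
  simp only [LinearMap.comp_apply, LinearEquiv.coe_coe, LinearEquiv.symm_apply_apply] at hgx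
  exact hgx

theorem ker_of_projective {π : P →ₗ[Λ] N} {π' : P' →ₗ[Λ] N} (hπ : Function.Surjective π)
    (hπ' : Function.Surjective π') [Module.Projective Λ P] [Module.Projective Λ P']
    (hK : (ker π).ExtendsMaps M) : (ker π').ExtendsMaps M := by
  obtain ⟨α, hα⟩ := Module.projective_lifting_property π π' hπ
  obtain ⟨β, hβ⟩ := Module.projective_lifting_property π' π hπ'
  replace hα (x : P') : π (α x) = π' x := LinearMap.congr_fun hα x
  replace hβ (x : P) : π' (β x) = π x := LinearMap.congr_fun hβ x
  intro h
  have hβker (x : ker π) : β x ∈ ker π' := by simp [hβ]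
  obtain ⟨g₀, hg₀⟩ := hK (h ∘ₗ codRestrict _ (β ∘ₗ (ker π).subtype) hβker)
  have hδ (x : P') : (LinearMap.id - β ∘ₗ α : P' →ₗ[Λ] P') x ∈ ker π' := by simp [hα, hβ]
  refine ⟨g₀ ∘ₗ α + h ∘ₗ codRestrict _ _ hδ, LinearMap.ext fun x => ?_⟩
  have hαx : α x ∈ ker π := by simp [hα]
  have hg₀x := LinearMap.congr_fun hg₀ ⟨α x, hαx⟩
  simp only [LinearMap.comp_apply, Submodule.coe_subtype] at hg₀x
  simp only [LinearMap.add_apply, LinearMap.comp_apply, Submodule.coe_subtype, hg₀x, ← map_add]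
  congr 1
  ext
  exact add_sub_cancel (β (α x)) (x : P')

theorem ker_of_projective_comap_range {π : P →ₗ[Λ] N} (hπ : Function.Surjective π)
    (hK : (ker π).ExtendsMaps M) [Module.Projective Λ Q] (c : Q →ₗ[Λ] N)
    [Module.Projective Λ (comap π (range c))] : (ker c).ExtendsMaps M := by
  let π' : comap π (range c) →ₗ[Λ] range c := π.restrict fun _ hx => hx
  have hπ' : Function.Surjective π' := by
    rintro ⟨y, hy⟩
    obtain ⟨x, rfl⟩ := hπ y
    exact ⟨⟨x, hy⟩, rfl⟩
  have hK' : (ker π').ExtendsMaps M := by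
    rw [ker_restrict]
    exact hK.comap_subtype fun x hx => by simp [mem_ker.mp hx]
  simpa using hK'.ker_of_projective hπ' c.surjective_rangeRestrict

theorem ker_piMap {ι : Type*} [Finite ι] {π : P →ₗ[Λ] N} (hK : (ker π).ExtendsMaps M) :
    (ker (piMap fun _ : ι => π)).ExtendsMaps M := by
  classical
  have := Fintype.ofFinite ι
  have hsingle (i : ι) (x : ker π) : Pi.single i (x : P) ∈ ker (piMap fun _ : ι => π) := by
    ext j
    by_cases hji : j = i <;> simp [hji]
  have hcoord (x : ker (piMap fun _ : ι => π)) (i : ι) : (x : ι → P) i ∈ ker π :=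
    congr_fun (mem_ker.mp x.2) i
  intro h
  choose g hg using fun i => hK (h ∘ₗ codRestrict _ (single Λ (fun _ => P) i ∘ₗ (ker π).subtype)
    (hsingle i))
  refine ⟨∑ i, g i ∘ₗ proj i, LinearMap.ext fun x => ?_⟩
  have hx : x = ∑ i, ⟨Pi.single i ((x : ι → P) i), hsingle i ⟨_, hcoord x i⟩⟩ :=
    Subtype.ext (by simp [Finset.univ_sum_single])
  conv_rhs => rw [hx]
  simp only [LinearMap.comp_apply, Submodule.coe_subtype, LinearMap.coe_sum, Finset.sum_apply,
    proj_apply, map_sum]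
  exact Finset.sum_congr rfl fun i _ => LinearMap.congr_fun (hg i) ⟨_, hcoord x i⟩

theorem of_comap {q : Q →ₗ[Λ] N} (hq : Function.Surjective q) {K : Submodule Λ N}
    (hK : (K.comap q).ExtendsMaps M) : K.ExtendsMaps M := by
  intro f
  obtain ⟨g, hg⟩ := hK (f ∘ₗ q.restrict fun _ hx => hx)
  have hg' (x : K.comap q) : g x = f ⟨q x, x.2⟩ := LinearMap.congr_fun hg x
  have hker : ker q ≤ ker g := fun x hx => by
    have hxK : x ∈ K.comap q := by simp [mem_ker.mp hx]
    rw [mem_ker, hg' ⟨x, hxK⟩, show (⟨q x, hxK⟩ : K) = 0 from Subtype.ext (mem_ker.mp hx),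
      map_zero]
  refine ⟨(ker q).liftQ g hker ∘ₗ (q.quotKerEquivOfSurjective hq).symm.toLinearMap,
    LinearMap.ext fun y => ?_⟩
  obtain ⟨x, hx⟩ := hq y
  have hxK : x ∈ K.comap q := by simp [hx]
  simp only [LinearMap.comp_apply, Submodule.coe_subtype, LinearEquiv.coe_coe, ← hx,
    quotKerEquivOfSurjective_symm_apply, Submodule.liftQ_apply, hg' ⟨x, hxK⟩]
  exact congrArg f (Subtype.ext hx)

end Submodule.ExtendsMaps

end ExtendsMaps

theorem CategoryTheory.ProjectiveResolution.extendsMaps_ker_π {Λ : Type} [Ring Λ]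
    {M : ModuleCat Λ} (P : ProjectiveResolution M) (N : ModuleCat Λ)
    (hMN : Limits.IsZero (ext1 Λ M N)) : (ker (P.π.f 0).hom).ExtendsMaps N := by
  let d := P.complex.d 1 0
  have hexact : range d.hom = ker (P.π.f 0).hom :=
    (ShortComplex.exact_of_g_is_cokernel (.mk _ _ P.complex_d_comp_π_f_zero)
      P.isColimitCokernelCofork).moduleCat_range_eq_ker
  have hHom (x : P.complex.X 1 ⟶ N) (hx : P.complex.d 2 1 ≫ x = 0) :
      ∃ g : P.complex.X 0 ⟶ N, d ≫ g = x := by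
    have hexact₁ := (HomologicalComplex.exactAt_iff_isZero_homology _ 1).mpr
      (hMN.of_iso (P.isoExt 1 N).symm)
    exact (ShortComplex.moduleCat_exact_iff _).mp
      ((HomologicalComplex.exactAt_iff' _ 0 1 2 (by simp) (by simp)).mp hexact₁) x hx
  have hd (y : P.complex.X 1) : d y ∈ ker (P.π.f 0).hom := hexact ▸ mem_range_self _ y
  intro h
  obtain ⟨g, hg⟩ := hHom (ModuleCat.ofHom (h ∘ₗ codRestrict _ d.hom hd)) (by
    ext y
    have hdd : d (P.complex.d 2 1 y) = 0 := by
      rw [← ConcreteCategory.comp_apply, P.complex.d_comp_d]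
      rfl
    exact (congrArg h (Subtype.ext hdd)).trans (map_zero h))
  refine ⟨g.hom, LinearMap.ext fun ⟨x, hx⟩ => ?_⟩
  obtain ⟨y, rfl⟩ := hexact.ge hx
  exact congrArg (fun φ => φ y) hg

theorem reject_hom_eq_zero_of_extendsMaps {Λ : Type} [Ring Λ] {M X : ModuleCat Λ}
    (h : (reject Λ M X).ExtendsMaps M) (f : reject Λ M X →ₗ[Λ] M) : f = 0 := by
  obtain ⟨g, rfl⟩ := h f
  ext ⟨x, hx⟩
  exact mem_ker.mp ((Submodule.mem_iInf _).mp hx g)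

theorem IsArtinian.exists_finset_iInf_eq {R M : Type*} [Ring R] [AddCommGroup M] [Module R M]
    [IsArtinian R M] {ι : Type*} (p : ι → Submodule R M) :
    ∃ s : Finset ι, ⨅ i ∈ s, p i = ⨅ i, p i := by
  classical
  obtain ⟨_, ⟨s, rfl⟩, hmin⟩ :=
    IsArtinian.set_has_minimal (Set.range fun s : Finset ι => ⨅ i ∈ s, p i) ⟨_, ⟨∅, rfl⟩⟩
  refine ⟨s, le_antisymm (le_iInf fun j => ?_) (le_iInf₂ fun i _ => iInf_le p i)⟩
  have : ¬(⨅ i ∈ insert j s, p i) < ⨅ i ∈ s, p i := hmin _ ⟨insert j s, rfl⟩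
  rw [Finset.iInf_insert] at this
  exact inf_eq_right.mp (inf_le_right.lt_or_eq.resolve_left this)

theorem Submodule.projective_of_hereditary {H : Type} [Ring H]
    (hher : ∀ P : ModuleCat.{u} H, Projective P →
      ∀ N : Submodule H P, Projective (ModuleCat.of H N))
    {P : Type v} [AddCommGroup P] [Module H P] [Small.{u} P] [Module.Projective H P]
    (N : Submodule H P) : Module.Projective H N := by
  let e : P ≃ₗ[H] Shrink.{u} P := (Shrink.linearEquiv H P).symm
  have := (IsProjective.iff_projective _).mpr <|
    hher (.of H (Shrink.{u} P)) ((IsProjective.iff_projective _).mp inferInstance)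
      (N.map (e : P →ₗ[H] Shrink.{u} P))
  exact .of_equiv (e.submoduleMap N).symm

theorem stmt2_general (k : Type) [Field k] (H : Type) [Ring H] [Algebra k H]
    [FiniteDimensional k H]
    (hher : ∀ P : ModuleCat H, Projective P →
      ∀ N : Submodule H P, Projective (ModuleCat.of H N))
    (M X : ModuleCat H) [Module.Finite H X]
    (hM : Limits.IsZero (ext1 H M M)) :
    ∀ f : ↥(reject H M X) →ₗ[H] M, f = 0 := by
  have : IsArtinianRing H := .of_finite k H
  obtain ⟨s, hs⟩ := IsArtinian.exists_finset_iInf_eq fun g : X →ₗ[H] M => ker g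
  obtain ⟨m, q, hq⟩ := Module.Finite.exists_fin' H X
  let c : (Fin m → H) →ₗ[H] s → M := pi fun g => g.1 ∘ₗ q
  have hc : ker c = (reject H M X).comap q := by
    simp [c, ker_pi, ker_comp, reject, ← hs, Submodule.comap_iInf, iInf_subtype']
  obtain ⟨P⟩ := HasProjectiveResolution.out (Z := M)
  let π₀ : P.complex.X 0 →ₗ[H] M := (P.π.f 0).hom
  have hK₀ : (ker π₀).ExtendsMaps M := P.extendsMaps_ker_π M hM
  let π := piMap fun _ : s => π₀
  have hπ : Function.Surjective π := Function.Surjective.piMap fun _ =>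
    (ModuleCat.epi_iff_surjective _).mp inferInstance
  have : Module.Projective H (P.complex.X 0) := (IsProjective.iff_projective _).mpr (P.projective 0)
  have : Module.Projective H (s → P.complex.X 0) := .of_equiv DFinsupp.linearEquivFunOnFintype
  have := Submodule.projective_of_hereditary hher (Submodule.comap π (range c))
  have hKc := hK₀.ker_piMap.ker_of_projective_comap_range hπ c
  exact reject_hom_eq_zero_of_extendsMaps ((hc ▸ hKc).of_comap hq)

/-- Let `H` be a finite dimensional hereditary algebra over a field `k` (every submodule of a
projective module is projective), and let `M`, `X` be finitely generated `H`-modules with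
`Ext¹(M, M) = 0`.  Then `Hom(rej_M(X), M) = 0`. -/
theorem stmt2 (k : Type) [Field k] (H : Type) [Ring H] [Algebra k H]
    [FiniteDimensional k H]
    (hher : ∀ P : ModuleCat H, Projective P →
      ∀ N : Submodule H P, Projective (ModuleCat.of H N))
    (M X : ModuleCat H) [Module.Finite H M] [Module.Finite H X]
    (hM : Limits.IsZero (ext1 H M M)) :
    ∀ f : ↥(reject H M X) →ₗ[H] M, f = 0 :=
  stmt2_general k H hher M X hM
end

section
/- Let Λ be a finite dimensional algebra and T a tilting module (pd T ≤ 1, Ext¹(T,T) = 0, and there is an exact sequence 0 → Λ → T₀ → T₁ → 0 with T₀, T₁ ∈ add T). Then Fac T, the class of factor modules of modules in add T, is closed under extensions: if 0 → X → Y → Z → 0 is exact with X, Z ∈ Fac T, then Y ∈ Fac T. -/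
open CategoryTheory

/-- `X ∈ add T`: `X` is a direct summand of a finite direct sum of copies of `T`. -/
def memAdd (Λ : Type) [Ring Λ] (T X : ModuleCat Λ) : Prop :=
  ∃ (n : ℕ) (i : X →ₗ[Λ] (Fin n → T)) (p : (Fin n → T) →ₗ[Λ] X),
    p ∘ₗ i = LinearMap.id

/-- `Y ∈ Fac T`: `Y` is a factor module of a module in `add T`. -/
def memFac (Λ : Type) [Ring Λ] (T Y : ModuleCat Λ) : Prop :=
  ∃ X : ModuleCat.{0} Λ, memAdd Λ T X ∧ ∃ p : X →ₗ[Λ] Y, Function.Surjective p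

/-- `T` is a tilting module: `pd T ≤ 1`, `Ext¹(T,T) = 0`, and there is an exact sequence
`0 → Λ → T₀ → T₁ → 0` with `T₀, T₁ ∈ add T`. -/
structure IsTilting (Λ : Type) [Ring Λ] (T : ModuleCat Λ) : Prop where
  pd : ∃ (n : ℕ) (p : (Fin n → Λ) →ₗ[Λ] T), Function.Surjective p ∧
    Projective (ModuleCat.of Λ ↥(LinearMap.ker p))
  ext_vanish : Limits.IsZero (ext1 Λ T T)
  cores : ∃ (T₀ T₁ : ModuleCat.{0} Λ), memAdd Λ T T₀ ∧ memAdd Λ T T₁ ∧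
    ∃ (f : Λ →ₗ[Λ] T₀) (g : T₀ →ₗ[Λ] T₁),
      Function.Injective f ∧ Function.Surjective g ∧ LinearMap.range f = LinearMap.ker g

/-!
A projective presentation `0 → K → F → T → 0` with `K` projective is a projective resolution
of `T`, so `Ext¹(T, T) = 0` says that every map `K → T` extends to `F`. Since `K` is projective,
this extension property passes from `T` to finite powers of `T` and then to their quotients,
i.e. to all of `Fac T`; in particular to `X' := ker (Y → Z)`, a quotient of `X`. Extending maps
`K → X'` is exactly what is needed to lift a map `T → Z` (first lifted to `F → Y`, then
corrected on `K`) to `T → Y`. Lifting a surjection `Tᵐ → Z` to `Y` and adding a surjection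
`Tⁿ → X'` gives a surjection `Tⁿ ⊕ Tᵐ → Y`.
-/

open Limits ZeroObject

namespace CategoryTheory.ShortComplex

variable {C : Type*} [Category* C] [Abelian C] (S : ShortComplex C)

noncomputable def twoTermComplex : ChainComplex C ℕ :=
  ChainComplex.of (fun | 0 => S.X₂ | 1 => S.X₁ | _ + 2 => 0) (fun | 0 => S.f | _ + 1 => 0)
    (fun _ => zero_comp)

@[simp]
lemma twoTermComplex_d_one_zero : S.twoTermComplex.d 1 0 = S.f := by
  simp [twoTermComplex, ChainComplex.of.d]

@[simp]
lemma twoTermComplex_d_succ_succ (n : ℕ) : S.twoTermComplex.d (n + 2) (n + 1) = 0 := by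
  simp [twoTermComplex, ChainComplex.of.d]
  rfl

variable {S}

noncomputable def ShortExact.projectiveResolution (hS : S.ShortExact) [Projective S.X₁]
    [Projective S.X₂] : ProjectiveResolution S.X₃ where
  complex := S.twoTermComplex
  projective
    | 0 => ‹Projective S.X₂›
    | 1 => ‹Projective S.X₁›
    | _ + 2 => (isZero_zero C).projective
  π := (ChainComplex.toSingle₀Equiv _ _).symm
    ⟨S.g, by rw [twoTermComplex_d_one_zero]; exact S.zero⟩
  quasiIso := ⟨fun
    | 0 => by
      rw [ChainComplex.quasiIsoAt₀_iff, ShortComplex.quasiIso_iff_of_zeros' _ rfl rfl rfl]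
      refine (ShortComplex.exact_and_epi_g_iff_of_iso (S₂ := S) ?_).2 ⟨hS.exact, hS.epi_g⟩
      refine ShortComplex.isoMk (Iso.refl _) (Iso.refl _) (Iso.refl _) ?_ ?_
      · exact (Category.id_comp _).trans
          ((twoTermComplex_d_one_zero S).symm.trans (Category.comp_id _).symm)
      · exact (Category.id_comp _).trans
          ((ChainComplex.toSingle₀Equiv_symm_apply_f_zero (C := S.twoTermComplex) (X := S.X₃)
            S.g _).symm.trans (Category.comp_id _).symm)
    | 1 => by
      rw [quasiIsoAt_iff_exactAt' _ _ (ChainComplex.exactAt_succ_single_obj _ _),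
        HomologicalComplex.exactAt_iff' _ 2 1 0 (by simp) (by simp),
        ShortComplex.exact_iff_mono _ (twoTermComplex_d_succ_succ S 0)]
      change Mono (S.twoTermComplex.d 1 0)
      rw [twoTermComplex_d_one_zero]
      exact hS.mono_f
    | n + 2 => by
      rw [quasiIsoAt_iff_exactAt' _ _ (ChainComplex.exactAt_succ_single_obj _ _)]
      exact .of_isZero (isZero_zero C)⟩

lemma ShortExact.exists_comp_eq_of_isZero_ext {R : Type*} [Ring R] [Linear R C]
    [EnoughProjectives C] (hS : S.ShortExact) [Projective S.X₁] [Projective S.X₂] {Y : C}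
    (hY : IsZero (((Ext R C 1).obj (Opposite.op S.X₃)).obj Y)) (α : S.X₁ ⟶ Y) :
    ∃ β : S.X₂ ⟶ Y, S.f ≫ β = α := by
  let K := hS.projectiveResolution.complex.linearYonedaObj R Y
  have hK : K.ExactAt 1 := (K.exactAt_iff_isZero_homology 1).2
    (hY.of_iso (hS.projectiveResolution.isoExt 1 Y).symm)
  rw [HomologicalComplex.exactAt_iff' _ 0 1 2 (by simp) (by simp),
    ShortComplex.moduleCat_exact_iff] at hK
  obtain ⟨β, hβ⟩ := hK α (by
    change S.twoTermComplex.d 2 1 ≫ α = 0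
    rw [twoTermComplex_d_succ_succ S 0]
    exact zero_comp)
  refine ⟨β, ?_⟩
  rw [← twoTermComplex_d_one_zero]
  exact hβ

end CategoryTheory.ShortComplex

namespace Submodule

variable {R M : Type*} [Ring R] [AddCommGroup M] [Module R M] (K : Submodule R M)

def MapsExtend (W : Type*) [AddCommGroup W] [Module R W] : Prop :=
  ∀ α : K →ₗ[R] W, ∃ β : M →ₗ[R] W, β ∘ₗ K.subtype = α

variable {K}

lemma MapsExtend.pi {ι : Type*} {W : ι → Type*} [∀ i, AddCommGroup (W i)]
    [∀ i, Module R (W i)] (h : ∀ i, K.MapsExtend (W i)) : K.MapsExtend (∀ i, W i) := by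
  intro α
  choose β hβ using fun i => h i (LinearMap.proj i ∘ₗ α)
  refine ⟨LinearMap.pi β, ?_⟩
  rw [LinearMap.pi_comp]
  simp only [hβ, LinearMap.pi_proj_comp]

lemma MapsExtend.of_surjective [Module.Projective R K] {W W' : Type*} [AddCommGroup W]
    [Module R W] [AddCommGroup W'] [Module R W'] (h : K.MapsExtend W) (s : W →ₗ[R] W')
    (hs : Function.Surjective s) : K.MapsExtend W' := by
  intro α
  obtain ⟨α₁, rfl⟩ := Module.projective_lifting_property s α hs
  obtain ⟨β, rfl⟩ := h α₁
  exact ⟨s ∘ₗ β, rfl⟩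

end Submodule

namespace LinearMap

variable {R M N P Q : Type*} [Ring R] [AddCommGroup M] [Module R M] [AddCommGroup N]
  [Module R N] [AddCommGroup P] [Module R P] [AddCommGroup Q] [Module R Q]

lemma exists_comp_eq_of_ker_le {q : M →ₗ[R] N} (hq : Function.Surjective q) {v : M →ₗ[R] P}
    (h : ker q ≤ ker v) : ∃ w : N →ₗ[R] P, w ∘ₗ q = v :=
  ⟨(ker q).liftQ v h ∘ₗ (q.quotKerEquivOfSurjective hq).symm.toLinearMap, by ext; simp⟩

lemma exists_comp_eq_of_mapsExtend_ker [Module.Projective R M] {q : M →ₗ[R] N}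
    (hq : Function.Surjective q) {g : P →ₗ[R] Q} (hg : Function.Surjective g)
    (h : (ker q).MapsExtend (ker g)) (φ : N →ₗ[R] Q) : ∃ ψ : N →ₗ[R] P, g ∘ₗ ψ = φ := by
  obtain ⟨u, hu⟩ := Module.projective_lifting_property g (φ ∘ₗ q) hg
  have hu_ker (x : ker q) : u x ∈ ker g := by
    rw [mem_ker, ← comp_apply, hu, comp_apply, x.2, map_zero]
  obtain ⟨β, hβ⟩ := h ((u ∘ₗ (ker q).subtype).codRestrict (ker g) hu_ker)
  have hv : ker q ≤ ker (u - (ker g).subtype ∘ₗ β) := fun x hx => by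
    have : (β x : P) = u x := congrArg Subtype.val (DFunLike.congr_fun hβ ⟨x, hx⟩)
    simp [this]
  obtain ⟨ψ, hψ⟩ := exists_comp_eq_of_ker_le hq hv
  refine ⟨ψ, (cancel_right hq).1 ?_⟩
  rw [comp_assoc, hψ, comp_sub, hu, ← comp_assoc, comp_ker_subtype, zero_comp, sub_zero]

lemma exists_comp_eq_pi {ι : Type*} [Finite ι] {g : P →ₗ[R] Q}
    (h : ∀ φ : M →ₗ[R] Q, ∃ ψ : M →ₗ[R] P, g ∘ₗ ψ = φ) (φ : (ι → M) →ₗ[R] Q) :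
    ∃ ψ : (ι → M) →ₗ[R] P, g ∘ₗ ψ = φ := by
  classical
  have := Fintype.ofFinite ι
  choose ψ hψ using fun i => h (φ ∘ₗ single R (fun _ => M) i)
  refine ⟨lsum R (fun _ => M) ℕ ψ, pi_ext fun i x => ?_⟩
  rw [comp_apply, lsum_piSingle, ← comp_apply, hψ i, comp_apply, single_apply]

lemma coprod_surjective_of_ker_le_range {A B : Type*} [AddCommGroup A] [Module R A]
    [AddCommGroup B] [Module R B] {a : A →ₗ[R] P} {b : B →ₗ[R] P} {g : P →ₗ[R] Q}
    (hab : ker g ≤ range a) (hb : Function.Surjective (g ∘ₗ b)) :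
    Function.Surjective (a.coprod b) := by
  rw [← range_eq_top, range_coprod, eq_top_iff]
  intro y _
  obtain ⟨x, hx⟩ := hb (g y)
  have hy : y - b x ∈ ker g := by simp [← comp_apply, hx]
  simpa using Submodule.add_mem_sup (hab hy) (mem_range_self b x)

end LinearMap

open LinearMap

universe u in
lemma Submodule.mapsExtend_ker_of_isZero_ext {R : Type u} [Ring R] {F : Type u}
    [AddCommGroup F] [Module R F] [Module.Projective R F] {T W : ModuleCat.{u} R} {q : F →ₗ[R] T}
    (hq : Function.Surjective q) [Module.Projective R (ker q)]
    (hW : IsZero (((Ext ℤ (ModuleCat.{u} R) 1).obj (Opposite.op T)).obj W)) :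
    (ker q).MapsExtend W := by
  let S := ShortComplex.moduleCatMk (ker q).subtype q (comp_ker_subtype q)
  have hS : S.ShortExact :=
    { exact := (ShortComplex.moduleCat_exact_iff_range_eq_ker S).2 (Submodule.range_subtype _)
      mono_f := (ModuleCat.mono_iff_injective _).2 Subtype.val_injective
      epi_g := (ModuleCat.epi_iff_surjective _).2 hq }
  have : Projective S.X₁ := (IsProjective.iff_projective _).1 ‹_›
  have : Projective S.X₂ := (IsProjective.iff_projective _).1 ‹_›
  intro α
  obtain ⟨β, hβ⟩ := hS.exists_comp_eq_of_isZero_ext hW (ModuleCat.ofHom α)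
  exact ⟨β.hom, congrArg ModuleCat.Hom.hom hβ⟩

lemma exists_surjective_of_memFac {Λ : Type} [Ring Λ] {T : ModuleCat Λ} {W : ModuleCat Λ}
    (h : memFac Λ T W) :
    ∃ (n : ℕ) (s : (Fin n → T) →ₗ[Λ] W), Function.Surjective s := by
  obtain ⟨A, ⟨n, i, r, hri⟩, s, hs⟩ := h
  exact ⟨n, s ∘ₗ r, hs.comp fun a => ⟨i a, congr($hri a)⟩⟩

lemma memFac_of_surjective {Λ : Type} [Ring Λ] {T : ModuleCat.{0} Λ} {W : ModuleCat Λ}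
    {ι : Type*} [Finite ι] (s : (ι → T) →ₗ[Λ] W) (hs : Function.Surjective s) : memFac Λ T W := by
  obtain ⟨n, ⟨e⟩⟩ := Finite.exists_equiv_fin ι
  exact ⟨ModuleCat.of Λ (Fin n → T), ⟨n, id, id, rfl⟩,
    s ∘ₗ (LinearEquiv.funCongrLeft Λ T e).toLinearMap, hs.comp (LinearEquiv.surjective _)⟩

theorem stmt5_general (Λ : Type) [Ring Λ]
    (T : ModuleCat Λ) (hT : IsTilting Λ T)
    (X Y Z : ModuleCat Λ)
    (f : X →ₗ[Λ] Y) (g : Y →ₗ[Λ] Z)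
    (hg : Function.Surjective g)
    (hexact : LinearMap.range f = LinearMap.ker g)
    (hX : memFac Λ T X) (hZ : memFac Λ T Z) :
    memFac Λ T Y := by
  obtain ⟨n, sX, hsX⟩ := exists_surjective_of_memFac hX
  obtain ⟨m, sZ, hsZ⟩ := exists_surjective_of_memFac hZ
  obtain ⟨r, q, hq, hK⟩ := hT.pd
  have : Module.Projective Λ (ker q) := (IsProjective.iff_projective _).2 hK
  have hKT : (ker q).MapsExtend T := Submodule.mapsExtend_ker_of_isZero_ext hq hT.ext_vanish
  have hfsX : range (f ∘ₗ sX) = ker g := by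
    rw [range_comp_of_range_eq_top _ (range_eq_top.2 hsX), hexact]
  have hKg : (ker q).MapsExtend (ker g) :=
    (Submodule.MapsExtend.pi fun _ => hKT).of_surjective
      ((f ∘ₗ sX).codRestrict (ker g) fun x => hfsX ▸ mem_range_self _ x)
      fun y => by simpa [Subtype.ext_iff] using hfsX.ge y.2
  obtain ⟨H, hH⟩ := exists_comp_eq_pi (exists_comp_eq_of_mapsExtend_ker hq hg hKg) sZ
  exact memFac_of_surjective ((f ∘ₗ sX).coprod H ∘ₗ
      (LinearEquiv.sumArrowLequivProdArrow _ _ Λ T).toLinearMap)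
    ((coprod_surjective_of_ker_le_range hfsX.ge (hH ▸ hsZ)).comp (LinearEquiv.surjective _))

/-- Let `Λ` be a finite dimensional algebra and `T` a tilting module.  Then `Fac T` is closed
under extensions: if `0 → X → Y → Z → 0` is exact with `X, Z ∈ Fac T`, then `Y ∈ Fac T`. -/
theorem stmt5 (k : Type) [Field k] (Λ : Type) [Ring Λ] [Algebra k Λ]
    [FiniteDimensional k Λ]
    (T : ModuleCat Λ) [Module.Finite Λ T] (hT : IsTilting Λ T)
    (X Y Z : ModuleCat Λ) [Module.Finite Λ X] [Module.Finite Λ Y] [Module.Finite Λ Z]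
    (f : X →ₗ[Λ] Y) (g : Y →ₗ[Λ] Z)
    (hf : Function.Injective f) (hg : Function.Surjective g)
    (hexact : LinearMap.range f = LinearMap.ker g)
    (hX : memFac Λ T X) (hZ : memFac Λ T Z) :
    memFac Λ T Y :=
  stmt5_general Λ T hT X Y Z f g hg hexact hX hZ
end

section
/- Let H be a finite dimensional hereditary algebra with a module T satisfying Ext¹(T,T) = 0. Suppose 0 → A → C → K → 0 is a short exact sequence where A → C is a minimal left add T-approximation. Then Ext¹(K, T) = 0. -/
open CategoryTheory

/-- `f : A → C` is a minimal left `add T`-approximation: `C ∈ add T`, every map from `A` to a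
module in `add T` factors through `f`, and `f` is left minimal. -/
def IsMinimalLeftAddApprox (Λ : Type) [Ring Λ] (T A C : ModuleCat Λ)
    (f : A →ₗ[Λ] C) : Prop :=
  memAdd Λ T C ∧
  (∀ (T' : ModuleCat.{0} Λ), memAdd Λ T T' → ∀ g : A →ₗ[Λ] T',
    ∃ h : C →ₗ[Λ] T', h ∘ₗ f = g) ∧
  (∀ e : C →ₗ[Λ] C, e ∘ₗ f = f → Function.Bijective e)

/-!
The `Ext(-, T)`-sequence of `0 → A → C → K → 0` gives
`Hom(C, T) → Hom(A, T) → Ext¹(K, T) → Ext¹(C, T)`. The first map is onto because `A → C` is a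
left `add T`-approximation, and `Ext¹(C, T) = 0` because `C` is a summand of some `Tⁿ`. In place of
the long exact sequence we use that `Ext¹(M, N) = 0` iff every map to `N` from the kernel of a
surjection onto `M` extends; this property passes from `C` to `K` by pulling surjections onto `K`
back along `C → K`.
-/

universe w u

open LinearMap

theorem LinearMap.exists_comp_eq_of_surjective_of_ker_le {R X M E : Type*} [Ring R]
    [AddCommGroup X] [Module R X] [AddCommGroup M] [Module R M] [AddCommGroup E] [Module R E]
    {π : X →ₗ[R] M} (hπ : Function.Surjective π) {w : X →ₗ[R] E} (hw : ker π ≤ ker w) :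
    ∃ σ : M →ₗ[R] E, σ ∘ₗ π = w :=
  ⟨(ker π).liftQ w hw ∘ₗ (π.quotKerEquivOfSurjective hπ).symm.toLinearMap, by
    ext x
    simp⟩

/-- The module-theoretic form of `Ext¹(M, N) = 0`, with the sources of the surjections in
`Type w`. -/
def KernelMapsExtend (R : Type*) [Ring R] (M N : Type*) [AddCommGroup M] [Module R M]
    [AddCommGroup N] [Module R N] : Prop :=
  ∀ (Y : Type w) [AddCommGroup Y] [Module R Y] (q : Y →ₗ[R] M), Function.Surjective q →
    ∀ φ : ker q →ₗ[R] N, ∃ ψ : Y →ₗ[R] N, ψ ∘ₗ (ker q).subtype = φ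

namespace KernelMapsExtend

variable {R : Type*} [Ring R] {M : Type u} {M' N : Type*} [AddCommGroup M] [Module R M]
  [AddCommGroup M'] [Module R M'] [AddCommGroup N] [Module R N]

theorem of_subsingleton [Subsingleton M] : KernelMapsExtend.{w} R M N := by
  intro Y _ _ q _ φ
  exact ⟨φ ∘ₗ codRestrict (ker q) LinearMap.id fun _ => Subsingleton.elim _ _, rfl⟩

theorem prod (h : KernelMapsExtend.{w} R M N) (h' : KernelMapsExtend.{w} R M' N) :
    KernelMapsExtend.{w} R (M × M') N := by
  intro Y _ _ q hq φ
  -- extend `φ` first to `Y₁ = q⁻¹(M × 0)`, then from `Y₁` to `Y`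
  set Y₁ := ker (snd R M M' ∘ₗ q)
  set q₁ : Y₁ →ₗ[R] M := fst R M M' ∘ₗ q ∘ₗ Y₁.subtype
  have hq₁ : Function.Surjective q₁ := fun m => by
    obtain ⟨y, hy⟩ := hq (m, 0)
    exact ⟨⟨y, mem_ker.2 (by simp [hy])⟩, by simp [q₁, hy]⟩
  have hker₁ : ∀ k : ker q₁, ((k : Y₁) : Y) ∈ ker q := fun k => Prod.ext k.2 (k : Y₁).2
  obtain ⟨ψ₁, hψ₁⟩ := h Y₁ q₁ hq₁ (φ ∘ₗ codRestrict _ (Y₁.subtype ∘ₗ (ker q₁).subtype) hker₁)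
  obtain ⟨ψ, hψ⟩ := h' Y (snd R M M' ∘ₗ q) (fun m' => (hq (0, m')).imp fun y hy => by simp [hy]) ψ₁
  refine ⟨ψ, LinearMap.ext fun k => ?_⟩
  have hk : q k = 0 := k.2
  have hk₁ : (k : Y) ∈ Y₁ := mem_ker.2 (by simp [hk])
  calc ψ k = ψ₁ ⟨k, hk₁⟩ := LinearMap.congr_fun hψ ⟨k, hk₁⟩
    _ = φ k := LinearMap.congr_fun hψ₁ ⟨⟨k, hk₁⟩, mem_ker.2 (by simp [q₁, hk])⟩

theorem of_exact {A K : Type*} {C : Type u} [AddCommGroup A] [Module R A] [AddCommGroup C]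
    [Module R C] [AddCommGroup K] [Module R K] (f : A →ₗ[R] C) (g : C →ₗ[R] K)
    (hg : Function.Surjective g) (hfg : range f = ker g)
    (hf : ∀ a : A →ₗ[R] N, ∃ b : C →ₗ[R] N, b ∘ₗ f = a)
    (hC : KernelMapsExtend.{max w u} R C N) : KernelMapsExtend.{w} R K N := by
  intro Y _ _ q hq φ
  set P := ker (q ∘ₗ fst R Y C - g ∘ₗ snd R Y C)
  have mem_P {y : Y} {c : C} : (y, c) ∈ P ↔ q y = g c := by simp [P, sub_eq_zero]
  set qC : P →ₗ[R] C := snd R Y C ∘ₗ P.subtype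
  set qY : P →ₗ[R] Y := fst R Y C ∘ₗ P.subtype
  have hqC : Function.Surjective qC := fun c => by
    obtain ⟨y, hy⟩ := hq (g c)
    exact ⟨⟨(y, c), mem_P.2 hy⟩, rfl⟩
  have hqY : Function.Surjective qY := fun y => by
    obtain ⟨c, hc⟩ := hg (q y)
    exact ⟨⟨(y, c), mem_P.2 hc.symm⟩, rfl⟩
  have hker : ∀ z : ker qC, qY z ∈ ker q := fun ⟨⟨(y, c), hz⟩, hc⟩ => by
    obtain rfl : c = 0 := hc
    exact mem_ker.2 ((mem_P.1 hz).trans (map_zero g))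
  obtain ⟨ψP, hψP⟩ := hC P qC hqC (φ ∘ₗ codRestrict _ (qY ∘ₗ (ker qC).subtype) hker)
  have hfP : ∀ a, ((0 : Y), f a) ∈ P := fun a => mem_P.2 <| by
    rw [map_zero, eq_comm, ← mem_ker, ← hfg]
    exact mem_range_self f a
  obtain ⟨b, hb⟩ := hf (ψP ∘ₗ codRestrict P (inr R Y C ∘ₗ f) hfP)
  -- `ψP` and `b` agree on the image of `A`, which is the kernel of `qY`
  obtain ⟨ψ, hψ⟩ := exists_comp_eq_of_surjective_of_ker_le hqY (w := ψP - b ∘ₗ qC) <| by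
    rintro ⟨⟨y, c⟩, hz⟩ (rfl : y = 0)
    obtain ⟨a, rfl⟩ : c ∈ range f := hfg ▸ (mem_P.1 hz).symm.trans (map_zero q)
    exact mem_ker.2 (sub_eq_zero.2 (LinearMap.congr_fun hb a).symm)
  refine ⟨ψ, LinearMap.ext fun k => ?_⟩
  have hk : ((k : Y), (0 : C)) ∈ P := mem_P.2 (k.2.trans (map_zero g).symm)
  calc ψ k = (ψP - b ∘ₗ qC) ⟨(k, 0), hk⟩ := LinearMap.congr_fun hψ ⟨(k, 0), hk⟩
    _ = ψP ⟨(k, 0), hk⟩ - b 0 := rfl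
    _ = φ k := by
      rw [map_zero, sub_zero]
      exact LinearMap.congr_fun hψP ⟨⟨(k, 0), hk⟩, rfl⟩

theorem of_retract (i : M' →ₗ[R] M) (p : M →ₗ[R] M') (hpi : p ∘ₗ i = LinearMap.id)
    (h : KernelMapsExtend.{max w u} R M N) : KernelMapsExtend.{w} R M' N := by
  refine h.of_exact (ker p).subtype p (fun m' => ⟨i m', LinearMap.congr_fun hpi m'⟩)
    (Submodule.range_subtype _) fun a => ?_
  have hmem : ∀ m, m - i (p m) ∈ ker p := fun m => by
    simp [← LinearMap.comp_apply p i, hpi]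
  exact ⟨a ∘ₗ codRestrict _ (LinearMap.id - i ∘ₗ p) hmem, by
    ext ⟨m, hm⟩
    exact congrArg a (Subtype.ext (by simp [mem_ker.1 hm]))⟩

theorem pi_fin (h : KernelMapsExtend.{max w u} R M N) :
    ∀ n : ℕ, KernelMapsExtend.{max w u} R (Fin n → M) N
  | 0 => of_subsingleton
  | n + 1 =>
    let e := Fin.consLinearEquiv R fun _ : Fin (n + 1) => M
    (h.prod (pi_fin h n)).of_retract e.symm.toLinearMap e.toLinearMap (by ext; simp)

end KernelMapsExtend

namespace CategoryTheory.ProjectiveResolution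

variable {R : Type*} [Ring R] {M : ModuleCat R} (P : ProjectiveResolution M)

theorem surjective_π_f_zero : Function.Surjective (P.π.f 0) :=
  (ModuleCat.epi_iff_surjective _).1 inferInstance

theorem range_d_one_zero : range (P.complex.d 1 0).hom = ker (P.π.f 0).hom :=
  (ShortComplex.moduleCat_exact_iff_range_eq_ker _).1 <|
    ShortComplex.exact_of_g_is_cokernel
      (ShortComplex.mk _ _ P.complex_d_comp_π_f_zero) P.isColimitCokernelCofork

theorem range_d_two_one : range (P.complex.d 2 1).hom = ker (P.complex.d 1 0).hom :=
  (ShortComplex.moduleCat_exact_iff_range_eq_ker _).1 (P.exact_succ 0)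

end CategoryTheory.ProjectiveResolution

section Ext

variable {H : Type} [Ring H]

theorem isZero_ext1_iff (M N : ModuleCat H) (P : ProjectiveResolution M) :
    Limits.IsZero (ext1 H M N) ↔ ∀ φ : P.complex.X 1 ⟶ N, P.complex.d 2 1 ≫ φ = 0 →
      ∃ ψ : P.complex.X 0 ⟶ N, P.complex.d 1 0 ≫ ψ = φ := by
  rw [ext1, (P.isoExt 1 N).isZero_iff, ← HomologicalComplex.exactAt_iff_isZero_homology,
    HomologicalComplex.exactAt_iff' _ 0 1 2 (by simp) (by simp),
    ShortComplex.moduleCat_exact_iff]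
  rfl

theorem kernelMapsExtend_of_isZero_ext1 {M N : ModuleCat H} (h : Limits.IsZero (ext1 H M N)) :
    KernelMapsExtend.{w} H M N := by
  obtain ⟨P⟩ := HasProjectiveResolution.out (Z := M)
  intro Y _ _ q hq φ
  obtain ⟨u, hu⟩ := Module.projective_lifting_property q (P.π.f 0).hom hq
  have hqu (x : P.complex.X 0) : q (u x) = P.π.f 0 x := LinearMap.congr_fun hu x
  have hud (y : P.complex.X 1) : u (P.complex.d 1 0 y) ∈ ker q := by
    rw [mem_ker, hqu, ← ModuleCat.comp_apply, P.complex_d_comp_π_f_zero]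
    rfl
  set v := codRestrict (ker q) (u ∘ₗ (P.complex.d 1 0).hom) hud
  obtain ⟨ψ₀, hψ₀⟩ := (isZero_ext1_iff M N P).1 h (ModuleCat.ofHom (φ ∘ₗ v)) <| by
    ext z
    have hdd : (P.complex.d 1 0).hom ((P.complex.d 2 1).hom z) = 0 := by
      rw [← LinearMap.comp_apply, ← ModuleCat.hom_comp, P.complex.d_comp_d]
      rfl
    have hv : v ((P.complex.d 2 1).hom z) = 0 := Subtype.ext (by simp [v, hdd])
    simp [hv]
  have hψ₀' (y : P.complex.X 1) : ψ₀ (P.complex.d 1 0 y) = φ (v y) :=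
    LinearMap.congr_fun (congrArg ModuleCat.Hom.hom hψ₀) y
  -- `Y` is the pushout of `ker q ← X₁ → X₀`, so `φ` and `ψ₀` glue to a map on `Y`
  have hsurj : Function.Surjective ((ker q).subtype.coprod u) := fun y => by
    obtain ⟨x, hx⟩ := P.surjective_π_f_zero (q y)
    exact ⟨(⟨y - u x, by rw [mem_ker, map_sub, hqu, hx, sub_self]⟩, x), by simp⟩
  have hker : ker ((ker q).subtype.coprod u) ≤ ker (φ.coprod ψ₀.hom) := by
    rintro ⟨k, x⟩ hkx
    have hux : u x = -k := eq_neg_of_add_eq_zero_right hkx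
    have hx : x ∈ ker (P.π.f 0).hom := by
      rw [mem_ker, ← hqu, hux, map_neg, k.2, neg_zero]
      rfl
    obtain ⟨z, rfl⟩ := P.range_d_one_zero ▸ hx
    have hk : k = -v z := Subtype.ext (by simp [v, hux])
    rw [mem_ker, coprod_apply, hψ₀', hk, map_neg, neg_add_cancel]
  obtain ⟨ψ, hψ⟩ := exists_comp_eq_of_surjective_of_ker_le hsurj hker
  refine ⟨ψ, LinearMap.ext fun k => ?_⟩
  simpa using LinearMap.congr_fun hψ (k, 0)

theorem isZero_ext1_of_kernelMapsExtend {M N : ModuleCat H} (h : KernelMapsExtend.{0} H M N) :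
    Limits.IsZero (ext1 H M N) := by
  obtain ⟨P⟩ := HasProjectiveResolution.out (Z := M)
  rw [isZero_ext1_iff M N P]
  intro φ hφ
  have hd (y : P.complex.X 1) : (P.complex.d 1 0).hom y ∈ ker (P.π.f 0).hom :=
    P.range_d_one_zero ▸ mem_range_self _ y
  set d := codRestrict _ (P.complex.d 1 0).hom hd
  have hdsurj : Function.Surjective d := fun ⟨x, hx⟩ => by
    obtain ⟨y, rfl⟩ := P.range_d_one_zero.symm ▸ hx
    exact ⟨y, rfl⟩
  have hdφ : ker d ≤ ker φ.hom := fun y hy => by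
    obtain ⟨z, rfl⟩ := P.range_d_two_one.symm ▸ mem_ker.2 (congrArg Subtype.val (mem_ker.1 hy))
    exact mem_ker.2 (LinearMap.congr_fun (congrArg ModuleCat.Hom.hom hφ) z)
  obtain ⟨φ', hφ'⟩ := exists_comp_eq_of_surjective_of_ker_le hdsurj hdφ
  obtain ⟨ψ, hψ⟩ := h _ (P.π.f 0).hom P.surjective_π_f_zero φ'
  refine ⟨ModuleCat.ofHom ψ, ModuleCat.hom_ext (LinearMap.ext fun y => ?_)⟩
  exact (LinearMap.congr_fun hψ (d y)).trans (LinearMap.congr_fun hφ' y)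

end Ext

theorem memAdd_self {Λ : Type} [Ring Λ] (T : ModuleCat Λ) : memAdd Λ T T :=
  ⟨1, LinearMap.pi fun _ => LinearMap.id, LinearMap.proj 0, rfl⟩

theorem stmt7_general (H : Type) [Ring H]
    (T : ModuleCat H)
    (hT : Limits.IsZero (ext1 H T T))
    (A C K : ModuleCat H)
    (f : A →ₗ[H] C) (g : C →ₗ[H] K)
    (hg : Function.Surjective g)
    (hexact : LinearMap.range f = LinearMap.ker g)
    (happrox : IsMinimalLeftAddApprox H T A C f) :
    Limits.IsZero (ext1 H K T) := by
  obtain ⟨⟨n, i, p, hpi⟩, hfactor, -⟩ := happrox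
  have hC : KernelMapsExtend H C T :=
    ((kernelMapsExtend_of_isZero_ext1 hT).pi_fin n).of_retract i p hpi
  exact isZero_ext1_of_kernelMapsExtend <|
    hC.of_exact f g hg hexact fun a => hfactor T (memAdd_self T) a

/-- Let `H` be a finite dimensional hereditary algebra with a module `T` satisfying
`Ext¹(T,T) = 0`.  If `0 → A → C → K → 0` is exact with `A → C` a minimal left
`add T`-approximation, then `Ext¹(K, T) = 0`. -/
theorem stmt7 (k : Type) [Field k] (H : Type) [Ring H] [Algebra k H]
    [FiniteDimensional k H]
    (hher : ∀ P : ModuleCat H, Projective P →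
      ∀ N : Submodule H P, Projective (ModuleCat.of H N))
    (T : ModuleCat H) [Module.Finite H T]
    (hT : Limits.IsZero (ext1 H T T))
    (A C K : ModuleCat H) [Module.Finite H A] [Module.Finite H C] [Module.Finite H K]
    (f : A →ₗ[H] C) (g : C →ₗ[H] K)
    (hf : Function.Injective f) (hg : Function.Surjective g)
    (hexact : LinearMap.range f = LinearMap.ker g)
    (happrox : IsMinimalLeftAddApprox H T A C f) :
    Limits.IsZero (ext1 H K T) :=
  stmt7_general H T hT A C K f g hg hexact happrox
end

section
/- Let C be the cluster category of a hereditary algebra H, T a tilting object in C, Γ = End_C(T)^op, and G = Hom_C(T, −) : C → mod Γ. Then G is dense: every finitely generated Γ-module Y is isomorphic to G(A) for some object A of C. Specifically, if P₁ → P₀ → Y → 0 is a projective presentation with Pᵢ = G(Tᵢ), Tᵢ ∈ add T, and the map T₁ → T₀ is completed to a triangle T₁ → T₀ → A → T₁[1] in C, then G(A) ≅ Y. -/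
open CategoryTheory Limits Pretriangulated Opposite

universe v u

/-- `X ∈ add T`: `X` is a direct summand of a finite direct sum of copies of `T`. -/
def memAddC {C : Type u} [Category.{v} C] [Preadditive C] [HasFiniteBiproducts C]
    (T X : C) : Prop :=
  ∃ (n : ℕ) (i : X ⟶ ⨁ (fun _ : Fin n => T)) (p : ⨁ (fun _ : Fin n => T) ⟶ X),
    i ≫ p = 𝟙 X

/-- The `End X`-module structure on `unop X ⟶ Y` for `X : Cᵒᵖ` (as in the older Mathlib). -/
instance moduleEndLeftOld {C : Type u} [Category.{v} C] [Preadditive C] {X : Cᵒᵖ} {Y : C} :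
    Module (End X) (unop X ⟶ Y) where
  smul r f := r.unop ≫ f
  one_smul := Category.id_comp
  mul_smul _ _ _ := Category.assoc _ _ _
  smul_zero _ := Limits.comp_zero
  zero_smul _ := Limits.zero_comp
  smul_add _ _ _ := Preadditive.comp_add _ _ _ _ _ _
  add_smul _ _ _ := Preadditive.add_comp _ _ _ _ _ _

/-- The older Mathlib's `preadditiveCoyonedaObj (X : Cᵒᵖ) : C ⥤ ModuleCat (End X)`. -/
def preadditiveCoyonedaObjOld {C : Type u} [Category.{v} C] [Preadditive C] (X : Cᵒᵖ) :
    C ⥤ ModuleCat.{v} (End X) where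
  obj Y := ModuleCat.of _ (unop X ⟶ Y)
  map f := ModuleCat.ofHom
    { toFun := fun g => g ≫ f
      map_add' := fun _ _ => Preadditive.add_comp _ _ _ _ _ _
      map_smul' := fun _ _ => Category.assoc _ _ _ }

/-- `T` is a tilting object: `Hom_C(T, X[1]) = 0` if and only if `X ∈ add T`. -/
def IsTiltingObject {C : Type u} [Category.{v} C] [Preadditive C] [HasFiniteBiproducts C]
    [HasShift C ℤ] (T : C) : Prop :=
  ∀ X : C, (∀ f : T ⟶ X⟦(1 : ℤ)⟧, f = 0) ↔ memAddC T X

/-!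
In the triangle `T₁ → T₀ → A → T₁[1]`, applying `Hom(T, −)` gives the exact sequence
`G T₁ → G T₀ → G A → Hom(T, T₁[1])`, and the last term vanishes because `T₁ ∈ add T` and `T`
is tilting. Hence `G A` is the cokernel of `G T₁ → G T₀`, which is `Y` by the choice of the
presentation. Density follows by completing any presentation to a triangle.
-/

theorem ModuleCat.nonempty_iso_of_surjective_of_ker_eq {R : Type*} [Ring R]
    {M N N' : ModuleCat R} (f : M ⟶ N) (f' : M ⟶ N') (hf : Function.Surjective f)
    (hf' : Function.Surjective f') (h : LinearMap.ker f.hom = LinearMap.ker f'.hom) :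
    Nonempty (N ≅ N') :=
  ⟨((f.hom.quotKerEquivOfSurjective hf).symm.trans
    ((Submodule.quotEquivOfEq _ _ h).trans (f'.hom.quotKerEquivOfSurjective hf'))).toModuleIso⟩

section

variable {C : Type u} [Category.{v} C] [Preadditive C] [HasZeroObject C] [HasShift C ℤ]
  [∀ n : ℤ, (shiftFunctor C n).Additive] [Pretriangulated C]

theorem range_preadditiveCoyonedaObjOld_map_mor₁_eq_ker (T : C) (Δ : Triangle C)
    (hΔ : Δ ∈ distTriang C) :
    LinearMap.range ((preadditiveCoyonedaObjOld (op T)).map Δ.mor₁).hom =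
      LinearMap.ker ((preadditiveCoyonedaObjOld (op T)).map Δ.mor₂).hom := by
  ext f
  constructor
  · rintro ⟨e, rfl⟩
    have hzero (e : T ⟶ Δ.obj₁) : (e ≫ Δ.mor₁) ≫ Δ.mor₂ = 0 := by
      rw [Category.assoc, comp_distTriang_mor_zero₁₂ _ hΔ, comp_zero]
    exact hzero e
  · intro hf
    obtain ⟨e, he⟩ := Δ.coyoneda_exact₂ hΔ (f : T ⟶ Δ.obj₂) hf
    exact ⟨e, he.symm⟩

theorem preadditiveCoyonedaObjOld_map_mor₂_surjective (T : C) (Δ : Triangle C)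
    (hΔ : Δ ∈ distTriang C) (hvanish : ∀ f : T ⟶ Δ.obj₁⟦(1 : ℤ)⟧, f = 0) :
    Function.Surjective ((preadditiveCoyonedaObjOld (op T)).map Δ.mor₂) := fun f => by
  obtain ⟨e, he⟩ := Δ.coyoneda_exact₃ hΔ (f : T ⟶ Δ.obj₃) (hvanish _)
  exact ⟨e, he.symm⟩

theorem nonempty_preadditiveCoyonedaObjOld_obj₃_iso (T : C) (Δ : Triangle C)
    (hΔ : Δ ∈ distTriang C) (hvanish : ∀ f : T ⟶ Δ.obj₁⟦(1 : ℤ)⟧, f = 0)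
    {Y : ModuleCat.{v} (End (op T))} (π : (preadditiveCoyonedaObjOld (op T)).obj Δ.obj₂ ⟶ Y)
    (hπ : Function.Surjective π)
    (hker : LinearMap.range ((preadditiveCoyonedaObjOld (op T)).map Δ.mor₁).hom =
      LinearMap.ker π.hom) :
    Nonempty ((preadditiveCoyonedaObjOld (op T)).obj Δ.obj₃ ≅ Y) :=
  ModuleCat.nonempty_iso_of_surjective_of_ker_eq _ π
    (preadditiveCoyonedaObjOld_map_mor₂_surjective T Δ hΔ hvanish) hπ
    (by rw [← range_preadditiveCoyonedaObjOld_map_mor₁_eq_ker T Δ hΔ, hker])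

end

/-- Let `C` be the cluster category of a hereditary algebra (a triangulated category), `T` a
tilting object, `Γ = End_C(T)ᵒᵖ`, and `G = Hom_C(T, −) : C → mod Γ` (which restricts to an
equivalence `add T → proj Γ`, so every finitely generated `Γ`-module has a projective
presentation by modules `G(T₁) → G(T₀)`).  Then:
(1) `G` is dense: every finitely generated `Γ`-module `Y` is isomorphic to `G(A)` for some
object `A` of `C`; and specifically
(2) if `G(T₁) → G(T₀) → Y → 0` is a projective presentation with `T₁, T₀ ∈ add T`, and the map
`T₁ → T₀` is completed to a triangle `T₁ → T₀ → A → T₁[1]` in `C`, then `G(A) ≅ Y`. -/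
theorem stmt11 {C : Type u} [Category.{v} C] [Preadditive C] [HasZeroObject C]
    [HasShift C ℤ] [∀ n : ℤ, (shiftFunctor C n).Additive] [Pretriangulated C]
    [HasFiniteBiproducts C]
    (T : C) (hT : IsTiltingObject T)
    (G : C ⥤ ModuleCat.{v} (End (op T))) (hG : G = preadditiveCoyonedaObjOld (op T))
    (hpres : ∀ Y : ModuleCat.{v} (End (op T)), Module.Finite (End (op T)) Y →
      ∃ (T₁ T₀ : C) (_ : memAddC T T₁) (_ : memAddC T T₀) (α : T₁ ⟶ T₀)
        (π : G.obj T₀ ⟶ Y), Function.Surjective π ∧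
          LinearMap.range (G.map α).hom = LinearMap.ker π.hom) :
    (∀ Y : ModuleCat.{v} (End (op T)), Module.Finite (End (op T)) Y →
      ∃ A : C, Nonempty (G.obj A ≅ Y)) ∧
    (∀ (T₁ T₀ A : C) (α : T₁ ⟶ T₀) (g : T₀ ⟶ A) (h : A ⟶ T₁⟦(1 : ℤ)⟧),
      memAddC T T₁ → memAddC T T₀ →
      (Triangle.mk α g h ∈ distTriang C) →
      ∀ (Y : ModuleCat.{v} (End (op T))) (π : G.obj T₀ ⟶ Y),
        Function.Surjective π → LinearMap.range (G.map α).hom = LinearMap.ker π.hom →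
        Nonempty (G.obj A ≅ Y)) := by
  subst hG
  refine ⟨fun Y hY => ?_, fun T₁ _ _ _ _ _ hT₁ _ hΔ _ π hπ hker =>
    nonempty_preadditiveCoyonedaObjOld_obj₃_iso T _ hΔ ((hT T₁).mpr hT₁) π hπ hker⟩
  obtain ⟨T₁, T₀, hT₁, -, α, π, hπ, hker⟩ := hpres Y hY
  obtain ⟨A, g, h, hΔ⟩ := distinguished_cocone_triangle α
  exact ⟨A, nonempty_preadditiveCoyonedaObjOld_obj₃_iso T _ hΔ ((hT T₁).mpr hT₁) π hπ hker⟩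
end

section
/- Let C be the cluster category of a hereditary algebra H, T a tilting object in C, Γ = End_C(T)^op, and G = Hom_C(T, −). Then the induced functor Ḡ : C/add(τT) → mod Γ is an equivalence of categories, where C/add(τT) is the factor category of C by the ideal of morphisms factoring through add(τT). -/
open CategoryTheory Limits Pretriangulated Opposite

universe v u

/-- A morphism factors through an object of `add N`. -/
def factorsThroughAdd {C : Type u} [Category.{v} C] [Preadditive C] [HasFiniteBiproducts C]
    (N : C) {X Y : C} (f : X ⟶ Y) : Prop :=
  ∃ (Z : C) (_ : memAddC N Z) (g : X ⟶ Z) (h : Z ⟶ Y), g ≫ h = f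

/-- The hom-relation defining the factor category `C/add N`: two morphisms are identified if
their difference factors through an object of `add N`. -/
def addQuotRel {C : Type u} [Category.{v} C] [Preadditive C] [HasFiniteBiproducts C]
    (N : C) : HomRel C :=
  fun {X Y : C} (f g : X ⟶ Y) => factorsThroughAdd N (f - g)

/-- The ring map `End X → (End (unop X))ᵐᵒᵖ`, `r ↦ op r.unop`. -/
def endOpToMopEnd {C : Type u} [Category.{v} C] [Preadditive C] (X : Cᵒᵖ) :
    End X →+* (End (unop X))ᵐᵒᵖ where
  toFun r := MulOpposite.op r.unop
  map_one' := rfl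
  map_mul' _ _ := rfl
  map_zero' := rfl
  map_add' _ _ := rfl

/-- The old `preadditiveCoyonedaObj` (for `X : Cᵒᵖ`, valued in `End X`-modules,
with `r • f = r.unop ≫ f`). -/
noncomputable def preadditiveCoyonedaObjOp {C : Type u} [Category.{v} C] [Preadditive C] (X : Cᵒᵖ) :
    C ⥤ ModuleCat.{v} (End X) :=
  preadditiveCoyonedaObj (unop X) ⋙ ModuleCat.restrictScalars (endOpToMopEnd X)

/-!
Every `X` sits in a triangle `K → Tⁿ → X → K[1]` in which `Tⁿ → X` hits a set of generators of the
finitely generated `Γ`-module `Hom(T, X)`. Since `Hom(T, Tⁿ[1]) = 0`, the long exact sequence gives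
`Hom(T, K[1]) = 0`, so `K ∈ add T` by the tilting property, and `K[1] ∈ add T[1] = add τT`.
A morphism killed by `Hom(T, -)` kills `Tⁿ → X`, hence factors through `X → K[1]`: this is
faithfulness. A `Γ`-linear map lifts along `Hom(T, Tⁿ) ≅ Γⁿ` to a morphism `Tⁿ → Y` that vanishes
on `K ∈ add T`, hence descends to `X`: this is fullness. For density, a presentation
`Γᵐ → Γⁿ → M → 0` is realised as `Hom(T, Tᵐ → Tⁿ)`, and `M ≅ Hom(T, cone)` because
`Hom(T, Tᵐ[1]) = 0`; the relations are finitely generated because `Hom(T, Tⁿ)` is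
finite-dimensional over `k`.
-/

section AddCategory

variable {C : Type u} [Category.{v} C] [Preadditive C] [HasFiniteBiproducts C]

noncomputable abbrev biproductPow (T : C) (n : ℕ) : C := ⨁ fun _ : Fin n => T

lemma memAddC_biproductPow (T : C) (n : ℕ) : memAddC T (biproductPow T n) :=
  ⟨n, 𝟙 _, 𝟙 _, Category.id_comp _⟩

lemma memAddC_self (T : C) : memAddC T T :=
  ⟨1, biproduct.ι (fun _ : Fin 1 => T) 0, biproduct.π _ 0, biproduct.ι_π_self _ _⟩

namespace memAddC

lemma of_iso_left {N N' X : C} (h : memAddC N X) (e : N ≅ N') : memAddC N' X := by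
  obtain ⟨n, i, p, hip⟩ := h
  let E := biproduct.mapIso fun _ : Fin n => e
  exact ⟨n, i ≫ E.hom, E.inv ≫ p, by simp [hip]⟩

lemma map {D : Type*} [Category D] [Preadditive D] [HasFiniteBiproducts D]
    (F : C ⥤ D) [F.Additive] {N X : C} (h : memAddC N X) : memAddC (F.obj N) (F.obj X) := by
  obtain ⟨n, i, p, hip⟩ := h
  let E := F.mapBiproduct fun _ : Fin n => N
  exact ⟨n, F.map i ≫ E.hom, E.inv ≫ F.map p, by simp [← F.map_comp, hip]⟩

lemma eq_zero_of_forall_eq_zero {N Z W : C} (hZ : memAddC N Z)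
    (hN : ∀ f : W ⟶ N, f = 0) (f : W ⟶ Z) : f = 0 := by
  obtain ⟨n, i, p, hip⟩ := hZ
  have : f ≫ i = 0 := biproduct.hom_ext _ _ fun j => by simp [hN (f ≫ i ≫ biproduct.π _ j)]
  rw [← Category.comp_id f, ← hip, reassoc_of% this, zero_comp]

lemma eq_zero_of_forall_comp_eq_zero {T W Y : C} (hW : memAddC T W) (m : W ⟶ Y)
    (h : ∀ t : T ⟶ W, t ≫ m = 0) : m = 0 := by
  obtain ⟨n, i, p, hip⟩ := hW
  have : p ≫ m = 0 := biproduct.hom_ext' _ _ fun j => by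
    simpa using h (biproduct.ι (fun _ : Fin n => T) j ≫ p)
  rw [← Category.id_comp m, ← hip, Category.assoc, this, comp_zero]

end memAddC

end AddCategory

section QuotientFunctor

variable {C : Type u} [Category.{v} C] [Preadditive C] [HasFiniteBiproducts C] [HasShift C ℤ]
  {T : C}

lemma IsTiltingObject.hom_eq_zero_of_iso_shift (hT : IsTiltingObject T) {N : C}
    (e : N ≅ T⟦(1 : ℤ)⟧) (f : T ⟶ N) : f = 0 := by
  rw [← cancel_mono e.hom, zero_comp]
  exact (hT T).2 (memAddC_self T) _

lemma IsTiltingObject.map_eq_of_addQuotRel (hT : IsTiltingObject T) {N : C}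
    (e : N ≅ T⟦(1 : ℤ)⟧) (X Y : C) (f₁ f₂ : X ⟶ Y) (h : addQuotRel N f₁ f₂) :
    (preadditiveCoyonedaObjOp (op T)).map f₁ = (preadditiveCoyonedaObjOp (op T)).map f₂ := by
  obtain ⟨Z, hZ, a, b, hab⟩ := h
  refine ModuleCat.hom_ext (LinearMap.ext fun (t : T ⟶ X) => ?_)
  change t ≫ f₁ = t ≫ f₂
  have : t ≫ a = 0 := hZ.eq_zero_of_forall_eq_zero (hT.hom_eq_zero_of_iso_shift e) _
  rw [← sub_eq_zero, ← Preadditive.comp_sub, ← hab, reassoc_of% this, zero_comp]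

noncomputable def IsTiltingObject.quotientCoyoneda (hT : IsTiltingObject T) {N : C}
    (e : N ≅ T⟦(1 : ℤ)⟧) :
    Quotient (addQuotRel N) ⥤ ModuleCat.{v} (End (op T)) :=
  CategoryTheory.Quotient.lift _ (preadditiveCoyonedaObjOp (op T)) (hT.map_eq_of_addQuotRel e)

end QuotientFunctor

namespace ClusterTilting

section HomModule

variable {C : Type u} [Category.{v} C] [Preadditive C] (T : C)

/-- `r • f = r.unop ≫ f`, the module structure of `(preadditiveCoyonedaObjOp (op T)).obj X`. -/
instance {X : C} : Module (End (op T)) (T ⟶ X) :=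
  Module.compHom (T ⟶ X) (endOpToMopEnd (op T))

def homComp {X Y : C} (g : X ⟶ Y) : (T ⟶ X) →ₗ[End (op T)] (T ⟶ Y) where
  toFun x := x ≫ g
  map_add' _ _ := Preadditive.add_comp _ _ _ _ _ _
  map_smul' _ _ := Category.assoc _ _ _

@[simp] lemma homComp_apply {X Y : C} (g : X ⟶ Y) (x : T ⟶ X) : homComp T g x = x ≫ g := rfl

lemma homComp_comp {X Y Z : C} (f : X ⟶ Y) (g : Y ⟶ Z) :
    homComp T (f ≫ g) = homComp T g ∘ₗ homComp T f :=
  LinearMap.ext fun _ => (Category.assoc _ _ _).symm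

instance {k : Type*} [Semiring k] [Linear k C] : SMul k (End (op T)) :=
  ⟨fun c r => (c • r.unop).op⟩

instance {k : Type*} [Semiring k] [Linear k C] {X : C} :
    IsScalarTower k (End (op T)) (T ⟶ X) :=
  ⟨fun c r f => Linear.smul_comp _ _ _ c r.unop f⟩

end HomModule

section FreeModules

variable {C : Type u} [Category.{v} C] [Preadditive C] [HasFiniteBiproducts C] (T : C)

noncomputable def homBiproductPowEquiv (n : ℕ) :
    (T ⟶ biproductPow T n) ≃ₗ[End (op T)] (Fin n → End (op T)) where
  toFun x j := (x ≫ biproduct.π _ j).op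
  invFun c := biproduct.lift fun j => (c j).unop
  map_add' x y := by funext j; simp
  map_smul' r x := by funext j; exact congrArg Quiver.Hom.op (Category.assoc _ _ _)
  left_inv x := biproduct.hom_ext _ _ fun j => by simp
  right_inv c := by funext j; simp

lemma sum_homBiproductPowEquiv_smul_ι {n : ℕ} (x : T ⟶ biproductPow T n) :
    ∑ j, homBiproductPowEquiv T n x j • biproduct.ι (fun _ : Fin n => T) j = x := by
  change ∑ j, (x ≫ biproduct.π _ j) ≫ biproduct.ι (fun _ : Fin n => T) j = x
  simp only [Category.assoc, ← Preadditive.comp_sum, biproduct.total, Category.comp_id]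

lemma linearMap_ext_biproductPow {M : Type*} [AddCommGroup M] [Module (End (op T)) M] {n : ℕ}
    {φ ψ : (T ⟶ biproductPow T n) →ₗ[End (op T)] M}
    (h : ∀ j, φ (biproduct.ι (fun _ : Fin n => T) j) = ψ (biproduct.ι (fun _ : Fin n => T) j)) :
    φ = ψ := by
  ext x
  rw [← sum_homBiproductPowEquiv_smul_ι T x]
  simp only [map_sum, map_smul, h]

lemma exists_homComp_eq {X : C} {n : ℕ} (φ : (T ⟶ biproductPow T n) →ₗ[End (op T)] (T ⟶ X)) :
    ∃ u : biproductPow T n ⟶ X, homComp T u = φ :=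
  ⟨biproduct.desc fun j => φ (biproduct.ι (fun _ : Fin n => T) j),
    linearMap_ext_biproductPow T fun _ => biproduct.ι_desc _ _⟩

lemma exists_surjective_of_finite (M : Type*) [AddCommGroup M] [Module (End (op T)) M]
    [Module.Finite (End (op T)) M] :
    ∃ (n : ℕ) (ρ : (T ⟶ biproductPow T n) →ₗ[End (op T)] M), Function.Surjective ρ := by
  obtain ⟨n, f, hf⟩ := Module.Finite.exists_fin' (End (op T)) M
  exact ⟨n, f ∘ₗ (homBiproductPowEquiv T n).toLinearMap,
    hf.comp (homBiproductPowEquiv T n).surjective⟩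

lemma exists_range_homComp_eq {X : C} {K : Submodule (End (op T)) (T ⟶ X)} (hK : K.FG) :
    ∃ (n : ℕ) (α : biproductPow T n ⟶ X), LinearMap.range (homComp T α) = K := by
  obtain ⟨n, f, hf⟩ := (Submodule.fg_iff_exists_fin_linearMap _ _).1 hK
  obtain ⟨α, hα⟩ := exists_homComp_eq T (f ∘ₗ (homBiproductPowEquiv T n).toLinearMap)
  refine ⟨n, α, ?_⟩
  rw [hα, LinearMap.range_comp_of_range_eq_top _ (homBiproductPowEquiv T n).range, hf]

end FreeModules

section Triangulated

variable {C : Type u} [Category.{v} C] [Preadditive C] [HasZeroObject C] [HasShift C ℤ]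
  [∀ n : ℤ, (shiftFunctor C n).Additive] [Pretriangulated C] (T : C)

lemma ker_homComp_mor₂ {Δ : Triangle C} (hΔ : Δ ∈ distTriang C) :
    LinearMap.ker (homComp T Δ.mor₂) = LinearMap.range (homComp T Δ.mor₁) := by
  ext x
  refine ⟨fun hx => ?_, ?_⟩
  · obtain ⟨y, rfl⟩ := Triangle.coyoneda_exact₂ _ hΔ x hx
    exact ⟨y, rfl⟩
  · rintro ⟨y, rfl⟩
    simp [comp_distTriang_mor_zero₁₂ _ hΔ]

lemma homComp_mor₂_surjective {Δ : Triangle C} (hΔ : Δ ∈ distTriang C)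
    (h : ∀ f : T ⟶ Δ.obj₁⟦(1 : ℤ)⟧, f = 0) : Function.Surjective (homComp T Δ.mor₂) := by
  intro f
  obtain ⟨x, rfl⟩ := Triangle.coyoneda_exact₃ _ hΔ f (h _)
  exact ⟨x, rfl⟩

lemma eq_zero_of_homComp_mor₁_surjective {Δ : Triangle C} (hΔ : Δ ∈ distTriang C)
    (h : ∀ f : T ⟶ Δ.obj₁⟦(1 : ℤ)⟧, f = 0) (h₁ : Function.Surjective (homComp T Δ.mor₁))
    (f : T ⟶ Δ.obj₃) : f = 0 := by
  obtain ⟨x, rfl⟩ := homComp_mor₂_surjective T hΔ h f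
  obtain ⟨y, rfl⟩ := h₁ x
  simp [comp_distTriang_mor_zero₁₂ _ hΔ]

end Triangulated

end ClusterTilting

namespace IsTiltingObject

open ClusterTilting

variable {C : Type u} [Category.{v} C] [Preadditive C] [HasZeroObject C] [HasShift C ℤ]
  [∀ n : ℤ, (shiftFunctor C n).Additive] [Pretriangulated C] [HasFiniteBiproducts C]
  {T : C}

lemma exists_distTriang (hT : IsTiltingObject T) (X : C) [Module.Finite (End (op T)) (T ⟶ X)] :
    ∃ (n : ℕ) (K : C) (a : K ⟶ biproductPow T n) (g : biproductPow T n ⟶ X) (h : X ⟶ K⟦(1 : ℤ)⟧),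
      Triangle.mk a g h ∈ distTriang C ∧ Function.Surjective (homComp T g) ∧ memAddC T K := by
  obtain ⟨n, g, hg⟩ :=
    exists_range_homComp_eq T (Module.Finite.fg_top (R := End (op T)) (M := T ⟶ X))
  have hg : Function.Surjective (homComp T g) := LinearMap.range_eq_top.1 hg
  obtain ⟨K, a, h, hΔ⟩ := distinguished_cocone_triangle₁ g
  refine ⟨n, K, a, g, h, hΔ, hg, (hT K).1 fun f => ?_⟩
  exact eq_zero_of_homComp_mor₁_surjective T (rot_of_distTriang _ hΔ)
    ((hT _).2 (memAddC_biproductPow T n)) hg f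

lemma factorsThroughAdd_shift (hT : IsTiltingObject T) {X Y : C}
    [Module.Finite (End (op T)) (T ⟶ X)] (f : X ⟶ Y) (hf : ∀ x : T ⟶ X, x ≫ f = 0) :
    factorsThroughAdd (T⟦(1 : ℤ)⟧) f := by
  obtain ⟨n, K, a, g, h, hΔ, -, hK⟩ := hT.exists_distTriang X
  have hgf : g ≫ f = 0 := (memAddC_biproductPow T n).eq_zero_of_forall_comp_eq_zero _
    fun t => by simpa using hf (t ≫ g)
  obtain ⟨f', hf'⟩ := Triangle.yoneda_exact₂ _ (rot_of_distTriang _ hΔ) f hgf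
  exact ⟨K⟦(1 : ℤ)⟧, hK.map _, h, f', hf'.symm⟩

lemma exists_homComp_eq (hT : IsTiltingObject T) {X Y : C} [Module.Finite (End (op T)) (T ⟶ X)]
    (φ : (T ⟶ X) →ₗ[End (op T)] (T ⟶ Y)) : ∃ f : X ⟶ Y, homComp T f = φ := by
  obtain ⟨n, K, a, g, h, hΔ, hg, hK⟩ := hT.exists_distTriang X
  obtain ⟨w, hw⟩ := ClusterTilting.exists_homComp_eq T (φ ∘ₗ homComp T g)
  have hag : a ≫ g = 0 := comp_distTriang_mor_zero₁₂ _ hΔ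
  have haw : a ≫ w = 0 := hK.eq_zero_of_forall_comp_eq_zero _ fun t => by
    have hw' := LinearMap.congr_fun hw (t ≫ a)
    simp only [homComp_apply, LinearMap.comp_apply, Category.assoc] at hw'
    rw [hw', hag, comp_zero, map_zero]
  obtain ⟨f, rfl⟩ : ∃ f : X ⟶ Y, w = g ≫ f := Triangle.yoneda_exact₂ _ hΔ w haw
  exact ⟨f, (LinearMap.cancel_right hg).1 (by rw [← homComp_comp, hw])⟩

lemma exists_iso_of_finite (hT : IsTiltingObject T) [∀ X : C, IsNoetherian (End (op T)) (T ⟶ X)]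
    (M : ModuleCat.{v} (End (op T))) [Module.Finite (End (op T)) M] :
    ∃ A : C, Nonempty ((preadditiveCoyonedaObjOp (op T)).obj A ≅ M) := by
  obtain ⟨n, ρ, hρ⟩ := exists_surjective_of_finite T M
  obtain ⟨m, α, hα⟩ := exists_range_homComp_eq T (IsNoetherian.noetherian (LinearMap.ker ρ))
  obtain ⟨A, g, v, hΔ⟩ := distinguished_cocone_triangle α
  have hg : Function.Surjective (homComp T g) :=
    homComp_mor₂_surjective T hΔ ((hT _).2 (memAddC_biproductPow T m))
  have hker : LinearMap.ker (homComp T g) = LinearMap.ker ρ := (ker_homComp_mor₂ T hΔ).trans hα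
  let e : (T ⟶ A) ≃ₗ[End (op T)] M :=
    ((homComp T g).quotKerEquivOfSurjective hg).symm ≪≫ₗ Submodule.quotEquivOfEq _ _ hker ≪≫ₗ
      ρ.quotKerEquivOfSurjective hρ
  exact ⟨A, ⟨e.toModuleIso⟩⟩

lemma quotientCoyoneda_full (hT : IsTiltingObject T) {N : C} (e : N ≅ T⟦(1 : ℤ)⟧)
    [∀ X : C, Module.Finite (End (op T)) (T ⟶ X)] :
    (hT.quotientCoyoneda e).Full := by
  refine ⟨fun {A B} φ => ?_⟩
  obtain ⟨f, hf⟩ := hT.exists_homComp_eq (X := A.as) (Y := B.as) φ.hom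
  exact ⟨(CategoryTheory.Quotient.functor _).map f, ModuleCat.hom_ext hf⟩

lemma quotientCoyoneda_faithful (hT : IsTiltingObject T) {N : C} (e : N ≅ T⟦(1 : ℤ)⟧)
    [∀ X : C, Module.Finite (End (op T)) (T ⟶ X)] :
    (hT.quotientCoyoneda e).Faithful := by
  refine ⟨fun {A B} f₁ f₂ h => ?_⟩
  obtain ⟨f₁, rfl⟩ := (CategoryTheory.Quotient.functor (addQuotRel N)).map_surjective f₁
  obtain ⟨f₂, rfl⟩ := (CategoryTheory.Quotient.functor (addQuotRel N)).map_surjective f₂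
  refine CategoryTheory.Quotient.sound _ ?_
  obtain ⟨Z, hZ, a, b, hab⟩ := hT.factorsThroughAdd_shift (f₁ - f₂) fun x => by
    rw [Preadditive.comp_sub, sub_eq_zero]
    exact LinearMap.congr_fun (congrArg ModuleCat.Hom.hom h) x
  exact ⟨Z, hZ.of_iso_left e.symm, a, b, hab⟩

end IsTiltingObject

/-- **Theorem A.**  Let `C` be the cluster category of a hereditary algebra, `T` a tilting
object, `Γ = End_C(T)ᵒᵖ` and `G = Hom_C(T,−)`.  Then the induced functor
`Gbar : C/add(τT) → mod Γ` is an equivalence of categories: there is a functor `Gbar` on the factor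
category `C/add(τT)` compatible with `G`, which is full, faithful, takes values in finitely
generated `Γ`-modules, and hits every finitely generated `Γ`-module up to isomorphism. -/
theorem stmt12 {C : Type u} [Category.{v} C] [Preadditive C] [HasZeroObject C]
    [HasShift C ℤ] [∀ n : ℤ, (shiftFunctor C n).Additive] [Pretriangulated C]
    [HasFiniteBiproducts C]
    (k : Type v) [Field k] [Linear k C]
    (hfin : ∀ X Y : C, FiniteDimensional k (X ⟶ Y))
    (τ : C ⥤ C) [τ.Additive] [τ.IsEquivalence] (hτ : τ ≅ shiftFunctor C (1 : ℤ))
    (T : C) (hT : IsTiltingObject T)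
    (G : C ⥤ ModuleCat.{v} (End (op T))) (hG : G = preadditiveCoyonedaObjOp (op T)) :
    ∃ Gbar : Quotient (addQuotRel (τ.obj T)) ⥤ ModuleCat.{v} (End (op T)),
      Nonempty ((Quotient.functor (addQuotRel (τ.obj T)) ⋙ Gbar) ≅ G) ∧
      Gbar.Full ∧ Gbar.Faithful ∧
      (∀ A, Module.Finite (End (op T)) (Gbar.obj A)) ∧
      (∀ Y : ModuleCat.{v} (End (op T)), Module.Finite (End (op T)) Y →
        ∃ A, Nonempty (Gbar.obj A ≅ Y)) := by
  subst hG
  have (X : C) : IsNoetherian (End (op T)) (T ⟶ X) :=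
    have := hfin T X
    isNoetherian_of_tower k inferInstance
  refine ⟨hT.quotientCoyoneda (hτ.app T), ⟨CategoryTheory.Quotient.lift.isLift _ _ _⟩,
    hT.quotientCoyoneda_full _, hT.quotientCoyoneda_faithful _, fun A => inferInstanceAs
      (Module.Finite (End (op T)) (T ⟶ A.as)), fun Y _ => ?_⟩
  obtain ⟨A, hA⟩ := hT.exists_iso_of_finite Y
  exact ⟨⟨A⟩, hA⟩
end
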